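/- For every normal form t ≠ e of the rewrite system R over {d, e, +, ·}, the constant e does not occur in t. -/

import Mathlib

/-- Ground terms over constants d, e with binary operations + (add) and · (app). -/
inductive Tm : Type
  | d : Tm
  | e : Tm
  | add : Tm → Tm → Tm
  | app : Tm → Tm → Tm
  deriving DecidableEq

open Tm

/-- Root rewrite steps: instances of the oriented rules. -/
inductive Root : Tm → Tm → Prop
  | addE (x) : Root (add x e) x
  | eAdd (x) : Root (add e x) x
  | assoc (x y z) : Root (add (add x y) z) (add x (add y z))
  | appAdd (x y z) : Root (app (add x y) z) (app y (app x z))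
  | appD (x y) : Root (app (app d x) y) (app x (add y x))
  | appE (x) : Root (app e x) x
  | dE : Root (app d e) e

/-- One rewrite step: a root step applied at some subterm position. -/
inductive Step : Tm → Tm → Prop
  | root {t u} : Root t u → Step t u
  | addL {t t' u} : Step t t' → Step (add t u) (add t' u)
  | addR {t u u'} : Step u u' → Step (add t u) (add t u')
  | appL {t t' u} : Step t t' → Step (app t u) (app t' u)
  | appR {t u u'} : Step u u' → Step (app t u) (app t u')

/-- Zero or more rewrite steps. -/
def Steps : Tm → Tm → Prop := Relation.ReflTransGen Step

/-- A normal form is a term to which no rule applies. -/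
def NormalForm (t : Tm) : Prop := ∀ u, ¬ Step t u

/-- Provable equality in the equational theory (reflexive symmetric transitive
congruence closure of the rule instances). -/
def TermEq : Tm → Tm → Prop := Relation.EqvGen Step

/-- The (reflexive) subterm relation. -/
inductive Subterm : Tm → Tm → Prop
  | refl (t) : Subterm t t
  | addL {s t u} : Subterm s t → Subterm s (add t u)
  | addR {s t u} : Subterm s u → Subterm s (add t u)
  | appL {s t u} : Subterm s t → Subterm s (app t u)
  | appR {s t u} : Subterm s u → Subterm s (app t u)

namespace NormalForm

variable {a b : Tm}

lemma add_left (h : NormalForm (add a b)) : NormalForm a :=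
  fun _ hs => h _ (Step.addL hs)

lemma add_right (h : NormalForm (add a b)) : NormalForm b :=
  fun _ hs => h _ (Step.addR hs)

lemma app_left (h : NormalForm (app a b)) : NormalForm a :=
  fun _ hs => h _ (Step.appL hs)

lemma app_right (h : NormalForm (app a b)) : NormalForm b :=
  fun _ hs => h _ (Step.appR hs)

/-- Every other head is removed by one of the rules `e·x`, `(x+y)·z`, `(d·x)·y`. -/
lemma app_head_eq_d (h : NormalForm (app a b)) : a = d := by
  induction a generalizing b with
  | d => rfl
  | e => exact absurd (Step.root (Root.appE b)) (h _)
  | add x y => exact absurd (Step.root (Root.appAdd x y b)) (h _)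
  | app c x ihc =>
    obtain rfl : c = d := ihc h.app_left
    exact absurd (Step.root (Root.appD x b)) (h _)

/-- An innermost occurrence of `e` in a normal form would be the argument of `x+e`, `e+x`, `e·x`
or `d·e`. -/
lemma eq_e_of_subterm_e {t : Tm} (ht : NormalForm t) (hs : Subterm e t) : t = e := by
  induction hs with
  | refl => rfl
  | @addL a b _ ih =>
    obtain rfl := ih ht.add_left
    exact absurd (Step.root (Root.eAdd b)) (ht _)
  | @addR a b _ ih =>
    obtain rfl := ih ht.add_right
    exact absurd (Step.root (Root.addE a)) (ht _)
  | @appL a b _ ih =>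
    obtain rfl := ih ht.app_left
    exact absurd (Step.root (Root.appE b)) (ht _)
  | @appR a b _ ih =>
    obtain rfl := ih ht.app_right
    obtain rfl := ht.app_head_eq_d
    exact absurd (Step.root Root.dE) (ht _)

end NormalForm

theorem e_not_in_nf :
    ∀ t : Tm, NormalForm t → t ≠ e → ¬ Subterm e t :=
  fun _ ht hne hs => hne (ht.eq_e_of_subterm_e hs)
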